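/- arXiv:2212.01130 — 2 statements merged into one kernel-verified Lean document; each statement's English description precedes it below -/
import Mathlib

section
/- For the bi-objective problem L1(θ) = 1 − exp(−‖θ − v‖²) and L2(θ) = 1 − exp(−‖θ + v‖²) with θ ∈ ℝ^d and v = (1/√d,…,1/√d), every point of the segment {t·v : t ∈ [−1, 1]} is Pareto optimal. -/
/-! The point `t • v` with `t ∈ [-1, 1]` lies on the segment from `-v` to `v`, so it minimises
`‖θ - v‖ + ‖θ + v‖`, whose minimum `2‖v‖` is forced by the triangle inequality. A minimiser of
the sum of two objectives is Pareto optimal, and Pareto optimality survives composing both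
objectives with the strictly increasing map `r ↦ 1 - exp (-r²)` on `[0, ∞)`. -/

open Set

def IsParetoOptimal {α : Type*} (f g : α → ℝ) (x : α) : Prop :=
  ¬ ∃ y, (f y ≤ f x ∧ g y ≤ g x) ∧ (f y < f x ∨ g y < g x)

theorem isParetoOptimal_of_forall_add_le {α : Type*} {f g : α → ℝ} {x : α}
    (h : ∀ y, f x + g x ≤ f y + g y) : IsParetoOptimal f g x := by
  rintro ⟨y, ⟨hf, hg⟩, hf_lt | hg_lt⟩ <;> linarith [h y]

theorem IsParetoOptimal.comp_strictMonoOn {α : Type*} {f g : α → ℝ} {x : α}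
    (hx : IsParetoOptimal f g x) {s : Set ℝ} {φ ψ : ℝ → ℝ}
    (hφ : StrictMonoOn φ s) (hψ : StrictMonoOn ψ s) (hf : ∀ y, f y ∈ s) (hg : ∀ y, g y ∈ s) :
    IsParetoOptimal (φ ∘ f) (ψ ∘ g) x := by
  rintro ⟨y, ⟨hfy, hgy⟩, hlt⟩
  refine hx ⟨y, ⟨?_, ?_⟩, ?_⟩
  · exact (hφ.le_iff_le (hf y) (hf x)).mp hfy
  · exact (hψ.le_iff_le (hg y) (hg x)).mp hgy
  · exact hlt.imp (hφ.lt_iff_lt (hf y) (hf x)).mp (hψ.lt_iff_lt (hg y) (hg x)).mp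

section NormedSpace

variable {E : Type*} [SeminormedAddCommGroup E] [NormedSpace ℝ E]

theorem two_mul_norm_le_norm_sub_add_norm_add (v θ : E) : 2 * ‖v‖ ≤ ‖θ - v‖ + ‖θ + v‖ := by
  calc 2 * ‖v‖ = ‖(θ + v) - (θ - v)‖ := by
        rw [add_sub_sub_cancel, ← two_smul ℝ v, norm_smul, Real.norm_two]
    _ ≤ ‖θ + v‖ + ‖θ - v‖ := norm_sub_le _ _
    _ = ‖θ - v‖ + ‖θ + v‖ := add_comm _ _

theorem norm_smul_sub_add_norm_smul_add {t : ℝ} (ht : t ∈ Icc (-1) 1) (v : E) :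
    ‖t • v - v‖ + ‖t • v + v‖ = 2 * ‖v‖ := by
  rw [show t • v - v = (t - 1) • v by module, show t • v + v = (t + 1) • v by module,
    norm_smul, norm_smul, Real.norm_eq_abs, Real.norm_eq_abs, abs_of_nonpos (by linarith [ht.2]), abs_of_nonneg (by linarith [ht.1])]
  ring

theorem isParetoOptimal_norm_sub_norm_add {t : ℝ} (ht : t ∈ Icc (-1) 1) (v : E) :
    IsParetoOptimal (fun θ => ‖θ - v‖) (fun θ => ‖θ + v‖) (t • v) :=
  isParetoOptimal_of_forall_add_le fun θ =>
    (norm_smul_sub_add_norm_smul_add ht v).trans_le (two_mul_norm_le_norm_sub_add_norm_add v θ)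

end NormedSpace

theorem strictMonoOn_one_sub_exp_neg_sq :
    StrictMonoOn (fun r : ℝ => 1 - Real.exp (-r ^ 2)) (Ici 0) := fun a ha b _ hab => by
  have hsq : a ^ 2 < b ^ 2 := pow_lt_pow_left₀ hab ha two_ne_zero
  simpa using Real.exp_lt_exp.mpr (neg_lt_neg hsq)

theorem stmt3_general (d : ℕ) :
    ∀ t : ℝ, t ∈ Set.Icc (-1 : ℝ) 1 →
      let v : EuclideanSpace ℝ (Fin d) := WithLp.toLp 2 (fun _ => 1 / Real.sqrt d)
      let L1 : EuclideanSpace ℝ (Fin d) → ℝ := fun θ => 1 - Real.exp (-‖θ - v‖ ^ 2)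
      let L2 : EuclideanSpace ℝ (Fin d) → ℝ := fun θ => 1 - Real.exp (-‖θ + v‖ ^ 2)
      ¬ ∃ θ : EuclideanSpace ℝ (Fin d),
          (L1 θ ≤ L1 (t • v) ∧ L2 θ ≤ L2 (t • v)) ∧
          (L1 θ < L1 (t • v) ∨ L2 θ < L2 (t • v)) := by
  intro t ht v L1 L2
  exact (isParetoOptimal_norm_sub_norm_add ht v).comp_strictMonoOn
    strictMonoOn_one_sub_exp_neg_sq strictMonoOn_one_sub_exp_neg_sq
    (fun θ => norm_nonneg (θ - v)) (fun θ => norm_nonneg (θ + v))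

/-- Every point of the segment `{t • v : t ∈ [-1,1]}`, with `v = (1/√d,…,1/√d)`,
is Pareto optimal for `L1 θ = 1 - exp(-‖θ - v‖²)`, `L2 θ = 1 - exp(-‖θ + v‖²)`. -/
theorem stmt3 (d : ℕ) (hd : 0 < d) :
    ∀ t : ℝ, t ∈ Set.Icc (-1 : ℝ) 1 →
      let v : EuclideanSpace ℝ (Fin d) := WithLp.toLp 2 (fun _ => 1 / Real.sqrt d)
      let L1 : EuclideanSpace ℝ (Fin d) → ℝ := fun θ => 1 - Real.exp (-‖θ - v‖ ^ 2)
      let L2 : EuclideanSpace ℝ (Fin d) → ℝ := fun θ => 1 - Real.exp (-‖θ + v‖ ^ 2)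
      ¬ ∃ θ : EuclideanSpace ℝ (Fin d),
          (L1 θ ≤ L1 (t • v) ∧ L2 θ ≤ L2 (t • v)) ∧
          (L1 θ < L1 (t • v) ∨ L2 θ < L2 (t • v)) :=
  stmt3_general d
end

section
/- Adding a non-dominated point strictly below the reference point strictly increases the hypervolume: if b satisfies b_i < z_i for all i and no s ∈ S satisfies s_i ≤ b_i for all i, then HV(S ∪ {b}) > HV(S). -/
open MeasureTheory

noncomputable def HV {J : ℕ} (z : Fin J → ℝ) (S : Finset (Fin J → ℝ)) : ENNReal :=
  volume (⋃ s ∈ S, Set.Icc s z)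

/-! The points strictly below every `s ∈ S` in some coordinate form an open neighbourhood of `b`.
Since `b < z`, `b` lies in the closure of the open box `∏ i, (b i, z i)`, so this neighbourhood
meets the box in a nonempty open set: a region of positive volume inside `Icc b z` that no old
point dominates. The old dominated region is compact, so its volume is finite and adding this
region increases it strictly. -/

open Set

lemma measure_lt_measure_union {α : Type*} [MeasurableSpace α] {μ : Measure α} {s t : Set α}
    (hs : MeasurableSet s) (hs_fin : μ s ≠ ⊤) (hts : 0 < μ (t \ s)) :
    μ s < μ (s ∪ t) := by
  rw [← measure_add_sdiff hs.nullMeasurableSet]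
  exact ENNReal.lt_add_right hs_fin hts.ne'

lemma isOpen_setOf_forall_exists_lt {ι : Type*} (S : Finset (ι → ℝ)) :
    IsOpen {x : ι → ℝ | ∀ s ∈ S, ∃ i, x i < s i} := by
  simp only [ofPred_forall, ofPred_exists]
  exact isOpen_biInter_finset fun s _ =>
    isOpen_iUnion fun i => isOpen_lt (continuous_apply i) continuous_const

lemma volume_Icc_diff_biUnion_Icc_pos {ι : Type*} [Fintype ι] {b z : ι → ℝ}
    {S : Finset (ι → ℝ)} (hb : ∀ i, b i < z i) (hnd : ∀ s ∈ S, ∃ i, b i < s i) :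
    0 < volume (Icc b z \ ⋃ s ∈ S, Icc s z) := by
  set U := {x : ι → ℝ | ∀ s ∈ S, ∃ i, x i < s i}
  set box := univ.pi fun i => Ioo (b i) (z i)
  have hb_closure : b ∈ closure box := by
    rw [closure_pi_set]
    intro i _
    simp only [closure_Ioo (hb i).ne]
    exact left_mem_Icc.2 (hb i).le
  have hU_box : (U ∩ box).Nonempty :=
    mem_closure_iff.1 hb_closure U (isOpen_setOf_forall_exists_lt S) hnd
  have hsub : U ∩ box ⊆ Icc b z \ ⋃ s ∈ S, Icc s z := by
    rintro x ⟨hxU, hx_box⟩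
    refine ⟨⟨fun i => (hx_box i trivial).1.le, fun i => (hx_box i trivial).2.le⟩, ?_⟩
    simp only [mem_iUnion, not_exists]
    intro s hs hxs
    obtain ⟨i, hi⟩ := hxU s hs
    exact (hi.trans_le (hxs.1 i)).false
  have hopen : IsOpen (U ∩ box) :=
    (isOpen_setOf_forall_exists_lt S).inter (isOpen_set_pi finite_univ fun i _ => isOpen_Ioo)
  exact (hopen.measure_pos volume hU_box).trans_le (measure_mono hsub)

theorem stmt6_general {J : ℕ} (z : Fin J → ℝ) (S : Finset (Fin J → ℝ)) (b : Fin J → ℝ)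
    (hb : ∀ i, b i < z i)
    (hnd : ¬ ∃ s ∈ S, ∀ i, s i ≤ b i) :
    HV z S < HV z (insert b S) := by
  push Not at hnd
  rw [HV, HV, Finset.set_biUnion_insert, union_comm]
  exact measure_lt_measure_union (S.measurableSet_biUnion fun _ _ => measurableSet_Icc)
    (S.isCompact_biUnion fun _ _ => isCompact_Icc).measure_lt_top.ne
    (volume_Icc_diff_biUnion_Icc_pos hb hnd)

/-- Adding a non-dominated point strictly below the reference point strictly
increases the hypervolume. -/
theorem stmt6 {J : ℕ} (z : Fin J → ℝ) (S : Finset (Fin J → ℝ)) (b : Fin J → ℝ)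
    (hS : ∀ s ∈ S, ∀ i, s i ≤ z i)
    (hb : ∀ i, b i < z i)
    (hnd : ¬ ∃ s ∈ S, ∀ i, s i ≤ b i) :
    HV z S < HV z (insert b S) :=
  stmt6_general z S b hb hnd
end
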